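/- Let n ≥ 1 and let f : [0,1]^n → ℝ be an arbitrary continuous function. Then there exist continuous univariate functions Φ_q : ℝ → ℝ for q = 1, …, 2n+1 and continuous univariate functions φ_{qp} : [0,1] → ℝ for q = 1, …, 2n+1 and p = 1, …, n, such that for every (x_1, …, x_n) ∈ [0,1]^n, f(x_1, …, x_n) = Σ_{q=1}^{2n+1} Φ_q( Σ_{p=1}^{n} φ_{qp}(x_p) ). -/

import Mathlib

/-!
Kahane's Baire-category proof. For inner functions `ψ_{qp} ∈ C([0, 1])` put
`y_q x = ∑_p ψ_{qp} (x_p)`. Perturb a given tuple `Ψ₀` by composing each `ψ_{qp}` with a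
continuous map that snaps `[0, 1]` to the cell centres of the `q`-th of `2n + 1` grids of mesh
`1 / N`, shifted by `q / ((2n + 1) N)`, and adding `δ (N + 1) ^ p` times that map. For generic
small `δ`, each `y_q` is then constant on the cubes of grid `q`, with different values on different
cubes, so a continuous `g_q`, bounded by `‖f‖ / (n + 1)`, can map the value of `y_q` on each cube
to `f / (n + 1)` at the cube's centre. A coordinate lies in the gaps of at most one grid, so every `x` lies in a cube for at
least `n + 1` of the `2n + 1` grids; these terms are each close to `f x / (n + 1)`, which leaves an
error of at most `n / (n + 1) * ‖f‖ + ε`. The tuples with this property form an open dense set,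
so by Baire one tuple has it for a countable dense set of `f` and all `ε = 1 / (k + 1)`. Then every
`u` is reduced by a fixed factor `θ < 1` by subtracting some `∑_q g_q ∘ y_q`, and summing the
outer functions along the iteration represents `u` exactly.
-/

open Set Function Filter Topology

noncomputable section

section Plateau

variable {ε : ℝ}

def plateau (ε u : ℝ) : ℝ := ⌊u + ε⌋ + min 1 (Int.fract (u + ε) / (2 * ε)) - 1 / 2

lemma monotone_plateau (hε : 0 < ε) : Monotone (plateau ε) := by
  intro u w huw
  have hv : u + ε ≤ w + ε := by linarith
  have hmin : ∀ v : ℝ, 0 ≤ min 1 (Int.fract v / (2 * ε)) ∧ min 1 (Int.fract v / (2 * ε)) ≤ 1 :=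
    fun v => ⟨le_min zero_le_one (by have := Int.fract_nonneg v; positivity), min_le_left _ _⟩
  unfold plateau
  rcases (Int.floor_le_floor hv).lt_or_eq with hlt | heq
  · have : (⌊u + ε⌋ : ℝ) + 1 ≤ ⌊w + ε⌋ := by exact_mod_cast hlt
    linarith [(hmin (u + ε)).2, (hmin (w + ε)).1]
  · have hfract : Int.fract (u + ε) ≤ Int.fract (w + ε) := by
      simp only [Int.fract, heq]; linarith
    rw [heq]
    gcongr

lemma surjective_plateau (hε : 0 < ε) (hε' : ε ≤ 1 / 2) : Surjective (plateau ε) := by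
  intro y
  set s := Int.fract (y + 1 / 2)
  have hs : 2 * ε * s < 1 := by
    nlinarith [Int.fract_nonneg (y + 1 / 2), Int.fract_lt_one (y + 1 / 2)]
  have hs0 : 0 ≤ 2 * ε * s := by have := Int.fract_nonneg (y + 1 / 2); positivity
  refine ⟨⌊y + 1 / 2⌋ + 2 * ε * s - ε, ?_⟩
  have hv : (⌊y + 1 / 2⌋ : ℝ) + 2 * ε * s - ε + ε = ⌊y + 1 / 2⌋ + 2 * ε * s := by ring
  rw [plateau, hv, Int.floor_intCast_add, Int.fract_intCast_add,
    Int.floor_eq_zero_iff.2 ⟨hs0, hs⟩, Int.fract_eq_self.2 ⟨hs0, hs⟩,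
    mul_div_cancel_left₀ _ (by positivity), min_eq_right (Int.fract_lt_one _).le]
  have := Int.floor_add_fract (y + 1 / 2)
  push_cast
  linarith

lemma continuous_plateau (hε : 0 < ε) (hε' : ε ≤ 1 / 2) : Continuous (plateau ε) :=
  (monotone_plateau hε).continuous_of_surjective (surjective_plateau hε hε')

lemma abs_plateau_sub_le (hε : 0 < ε) (hε' : ε ≤ 1 / 2) (u : ℝ) : |plateau ε u - u| ≤ 1 := by
  have hfl := Int.floor_add_fract (u + ε)
  have h0 := Int.fract_nonneg (u + ε)
  have h1 := Int.fract_lt_one (u + ε)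
  have hdiv : Int.fract (u + ε) ≤ Int.fract (u + ε) / (2 * ε) := by
    rw [le_div_iff₀ (by positivity)]; nlinarith
  have hmin : Int.fract (u + ε) ≤ min 1 (Int.fract (u + ε) / (2 * ε)) := le_min h1.le hdiv
  have hmin' : min 1 (Int.fract (u + ε) / (2 * ε)) ≤ 1 := min_le_left _ _
  rw [abs_le, plateau]
  constructor <;> linarith

lemma plateau_eq_of_mem_Icc (hε : 0 < ε) {u : ℝ} (k : ℤ) (hu : u ∈ Icc (k + ε) (k + 1 - ε)) :
    plateau ε u = k + 1 / 2 := by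
  obtain ⟨hlo, hhi⟩ := hu
  rcases hhi.lt_or_eq with hlt | heq
  · have hfloor : ⌊u + ε⌋ = k := by rw [Int.floor_eq_iff]; constructor <;> linarith
    have hfract : Int.fract (u + ε) = u + ε - k := by rw [Int.fract, hfloor]
    have hge : 1 ≤ Int.fract (u + ε) / (2 * ε) := by
      rw [hfract, le_div_iff₀ (by positivity)]; linarith
    rw [plateau, hfloor, min_eq_left hge]
    ring
  · have hint : u + ε = ((k + 1 : ℤ) : ℝ) := by push_cast; linarith
    rw [plateau, hint, Int.floor_intCast, Int.fract_intCast, zero_div, min_eq_right zero_le_one]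
    push_cast
    ring

end Plateau

def NearInt (ε u : ℝ) : Prop := ∃ z : ℤ, |u - z| < ε

lemma mem_Icc_natFloor_of_not_nearInt {ε u : ℝ} (hu : 0 ≤ u) (h : ¬ NearInt ε u) :
    u ∈ Icc ((⌊u⌋₊ : ℤ) + ε) ((⌊u⌋₊ : ℤ) + 1 - ε) := by
  simp only [NearInt, not_exists, not_lt] at h
  have h₁ := h ⌊u⌋₊
  have h₂ := h (⌊u⌋₊ + 1)
  have hlo := Nat.floor_le hu
  have hhi := Nat.lt_floor_add_one u
  push_cast at h₁ h₂ ⊢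
  rw [abs_of_nonneg (by linarith)] at h₁
  rw [abs_of_neg (by linarith)] at h₂
  constructor <;> linarith

lemma subsingleton_setOf_nearInt_add_div {m : ℕ} (u : ℝ) :
    {q : Fin m | NearInt (1 / (2 * m)) (u + q / m)}.Subsingleton := by
  rintro q ⟨z, hz⟩ q' ⟨z', hz'⟩
  have hm : (0 : ℝ) < m := by exact_mod_cast q.pos
  have scale : ∀ (k : ℕ) (w : ℤ), |u + k / m - w| < 1 / (2 * m) → |m * u + k - m * w| < 1 / 2 := by
    intro k w h
    have e : (m : ℝ) * u + k - m * w = m * (u + k / m - w) := by field_simp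
    rw [e, abs_mul, abs_of_pos hm]
    calc (m : ℝ) * |u + k / m - w| < m * (1 / (2 * m)) := by gcongr
      _ = 1 / 2 := by field_simp
  have hdiff : |(((q : ℤ) - q' - m * (z - z') : ℤ) : ℝ)| < 1 := by
    have e : (((q : ℤ) - q' - m * (z - z') : ℤ) : ℝ)
        = (m * u + q - m * z) - (m * u + q' - m * z') := by push_cast; ring
    rw [e]
    linarith [abs_sub (m * u + q - m * z) (m * u + q' - m * z'), scale q z hz, scale q' z' hz']
  have hk : (q : ℤ) - q' = m * (z - z') := by
    have : |(q : ℤ) - q' - m * (z - z')| < 1 := by exact_mod_cast hdiff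
    linarith [Int.abs_lt_one_iff.1 this]
  have hq : (q : ℤ) - q' = 0 :=
    Int.eq_zero_of_abs_lt_dvd ⟨_, hk⟩ (by rw [abs_lt]; constructor <;> omega)
  exact Fin.ext (by omega)

section Snap

variable {ε : ℝ} {N : ℕ} {s : ℝ}

def snap (ε : ℝ) (N : ℕ) (s t : ℝ) : ℝ := (plateau ε (N * t + s) - s) / N

lemma continuous_snap (hε : 0 < ε) (hε' : ε ≤ 1 / 2) : Continuous (snap ε N s) :=
  (((continuous_plateau hε hε').comp (by fun_prop)).sub continuous_const).div_const _

lemma abs_snap_sub_le (hε : 0 < ε) (hε' : ε ≤ 1 / 2) (hN : 0 < N) (t : ℝ) :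
    |snap ε N s t - t| ≤ 1 / N := by
  have hN' : (0 : ℝ) < N := by exact_mod_cast hN
  have e : snap ε N s t - t = (plateau ε (N * t + s) - (N * t + s)) / N := by
    rw [snap]; field_simp; ring
  rw [e, abs_div, abs_of_pos hN']
  gcongr
  exact abs_plateau_sub_le hε hε' _

lemma snap_eq_of_not_nearInt (hε : 0 < ε) {t : ℝ} (h₀ : 0 ≤ N * t + s)
    (h : ¬ NearInt ε (N * t + s)) : snap ε N s t = (⌊N * t + s⌋₊ + 1 / 2 - s) / N := by
  rw [snap, plateau_eq_of_mem_Icc hε _ (mem_Icc_natFloor_of_not_nearInt h₀ h)]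
  push_cast
  ring

end Snap

lemma injective_sum_mul_pow (n K : ℕ) :
    Injective fun J : Fin n → Fin K => ∑ p, (J p : ℝ) * K ^ (p : ℕ) := by
  intro J J' h
  apply finFunctionFinEquiv.injective
  apply Fin.ext
  rw [finFunctionFinEquiv_apply, finFunctionFinEquiv_apply]
  simp only at h
  exact_mod_cast h

lemma finite_setOf_not_injective_add_mul {ι : Type*} [Finite ι] {A B : ι → ℝ}
    (hB : Injective B) : {δ : ℝ | ¬ Injective fun i => A i + δ * B i}.Finite := by
  refine (finite_range fun ij : ι × ι => (A ij.2 - A ij.1) / (B ij.1 - B ij.2)).subset ?_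
  intro δ hδ
  simp only [Injective, not_forall] at hδ
  obtain ⟨i, j, hij, hne⟩ := hδ
  have hB' : B i - B j ≠ 0 := sub_ne_zero.2 (hB.ne hne)
  exact ⟨(i, j), by field_simp; linarith⟩

lemma exists_bounded_interpolation {ι : Type*} [Finite ι] {S : ι → ℝ} (hS : Injective S)
    (a : ι → ℝ) {C : ℝ} (hC : 0 ≤ C) (ha : ∀ i, |a i| ≤ C) :
    ∃ g : C(ℝ, ℝ), (∀ t, |g t| ≤ C) ∧ ∀ i, g (S i) = a i := by
  let _ : TopologicalSpace ι := ⊥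
  have : DiscreteTopology ι := ⟨rfl⟩
  obtain ⟨g, hg, hgS⟩ := ContinuousMap.exists_extension_forall_mem_of_isClosedEmbedding
    ⟨a, continuous_of_discreteTopology⟩ (t := Icc (-C) C) (fun i => abs_le.1 (ha i))
    ⟨0, by simp [hC]⟩ (continuous_of_discreteTopology.isClosedEmbedding hS)
  exact ⟨g, fun t => abs_le.2 (hg t), congrFun hgS⟩

open Finset in
lemma exists_finset_card_sub_le_forall_not {ι κ : Type*} [Fintype ι] [Fintype κ]
    (B : ι → κ → Prop) (hB : ∀ k, {i | B i k}.Subsingleton) :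
    ∃ G : Finset ι, Fintype.card ι - Fintype.card κ ≤ G.card ∧ ∀ i ∈ G, ∀ k, ¬ B i k := by
  classical
  refine ⟨univ.filter fun i => ∀ k, ¬ B i k, ?_, fun i hi => (mem_filter.1 hi).2⟩
  have hbad : #(univ.filter fun i => ∃ k, B i k) ≤ Fintype.card κ :=
    calc #(univ.filter fun i => ∃ k, B i k)
        ≤ #(univ.biUnion fun k => univ.filter fun i => B i k) :=
          card_le_card fun i => by simp
      _ ≤ ∑ k, #(univ.filter fun i => B i k) := card_biUnion_le
      _ ≤ ∑ _k : κ, 1 := sum_le_sum fun k _ => card_le_one.2 fun i hi j hj =>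
          hB k (mem_filter.1 hi).2 (mem_filter.1 hj).2
      _ = Fintype.card κ := by simp
  have hsplit := card_filter_add_card_filter_not (s := univ) fun i : ι => ∃ k, B i k
  simp only [not_exists, Finset.card_univ] at hsplit
  omega

lemma abs_sub_sum_le_of_card_le {ι : Type*} [Fintype ι] (G : Finset ι) {a C η k : ℝ}
    (b : ι → ℝ) (hk : 0 < k) (hGk : k ≤ G.card) (ha : |a| ≤ C) (hb : ∀ i, |b i| ≤ C / k)
    (hG : ∀ i ∈ G, |b i - a / k| ≤ η) :
    |a - ∑ i, b i| ≤ (Fintype.card ι / k - 1) * C + G.card * η := by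
  classical
  have hsplit : a - ∑ i, b i
      = (1 - G.card / k) * a - ∑ i ∈ G, (b i - a / k) - ∑ i ∈ Gᶜ, b i := by
    rw [← Finset.sum_compl_add_sum G, Finset.sum_sub_distrib, Finset.sum_const, nsmul_eq_mul]
    ring
  have hgood : |∑ i ∈ G, (b i - a / k)| ≤ G.card * η := by
    simpa using (Finset.abs_sum_le_sum_abs _ _).trans (Finset.sum_le_card_nsmul _ _ _ hG)
  have hbad : |∑ i ∈ Gᶜ, b i| ≤ (Fintype.card ι - G.card) * (C / k) := by
    have := (Finset.abs_sum_le_sum_abs _ _).trans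
      (Finset.sum_le_card_nsmul Gᶜ (fun i => |b i|) _ fun i _ => hb i)
    rwa [nsmul_eq_mul, Finset.card_compl, Nat.cast_sub (Finset.card_le_univ G)] at this
  have hmain : |(1 - G.card / k) * a| ≤ (G.card / k - 1) * C := by
    rw [abs_mul, abs_of_nonpos (by rw [sub_nonpos, one_le_div hk]; exact hGk), neg_sub]
    exact mul_le_mul_of_nonneg_left ha (by rw [sub_nonneg, one_le_div hk]; exact hGk)
  have hC : (G.card / k - 1) * C + (Fintype.card ι - G.card) * (C / k)
      = (Fintype.card ι / k - 1) * C := by ring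
  rw [hsplit]
  linarith [abs_sub ((1 - G.card / k) * a - ∑ i ∈ G, (b i - a / k)) (∑ i ∈ Gᶜ, b i),
    abs_sub ((1 - G.card / k) * a) (∑ i ∈ G, (b i - a / k))]

lemma UniformContinuous.eventually_forall_dist_lt {α β : Type*} [PseudoMetricSpace α]
    [PseudoMetricSpace β] {g : α → β} (hg : UniformContinuous g) {ε : ℝ} (hε : 0 < ε) :
    ∀ᶠ N : ℕ in atTop, ∀ a b, dist a b ≤ 1 / N → dist (g a) (g b) < ε := by
  obtain ⟨δ, hδ, hg⟩ := Metric.uniformContinuous_iff.1 hg ε hε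
  filter_upwards [tendsto_one_div_atTop_nhds_zero_nat.eventually (gt_mem_nhds hδ)]
    with N hN a b hab using hg (hab.trans_lt hN)

theorem exists_sum_comp_eq_of_contracting {X ι : Type*} [TopologicalSpace X] [CompactSpace X]
    [Fintype ι] (y : ι → C(X, ℝ)) {C θ : ℝ} (hθ₀ : 0 ≤ θ) (hθ₁ : θ < 1)
    (h : ∀ u : C(X, ℝ), ∃ g : ι → C(ℝ, ℝ),
      (∀ i t, |g i t| ≤ C * ‖u‖) ∧ ‖u - ∑ i, (g i).comp (y i)‖ ≤ θ * ‖u‖)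
    (u : C(X, ℝ)) : ∃ Φ : ι → C(ℝ, ℝ), ∀ x, u x = ∑ i, Φ i (y i x) := by
  choose g hg_bound hg_approx using h
  let v : ℕ → C(X, ℝ) := fun r => (fun w => w - ∑ i, (g w i).comp (y i))^[r] u
  have hv_succ : ∀ r, v (r + 1) = v r - ∑ i, (g (v r) i).comp (y i) := fun r =>
    iterate_succ_apply' _ r u
  have hv_norm : ∀ r, ‖v r‖ ≤ θ ^ r * ‖u‖ := by
    intro r
    induction r with
    | zero => simp [v]
    | succ r ih =>
      rw [hv_succ, pow_succ', mul_assoc]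
      exact (hg_approx _).trans (mul_le_mul_of_nonneg_left ih hθ₀)
  have hg_le : ∀ i r t, ‖g (v r) i t‖ ≤ |C| * (θ ^ r * ‖u‖) := fun i r t =>
    calc ‖g (v r) i t‖ ≤ C * ‖v r‖ := hg_bound _ i t
      _ ≤ |C| * ‖v r‖ := mul_le_mul_of_nonneg_right (le_abs_self C) (norm_nonneg _)
      _ ≤ |C| * (θ ^ r * ‖u‖) := mul_le_mul_of_nonneg_left (hv_norm r) (abs_nonneg C)
  have hsum : Summable fun r : ℕ => |C| * (θ ^ r * ‖u‖) :=
    ((summable_geometric_of_lt_one hθ₀ hθ₁).mul_right _).mul_left _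
  refine ⟨fun i => ⟨fun t => ∑' r, g (v r) i t,
    continuous_tsum (fun r => (g (v r) i).continuous) hsum (hg_le i)⟩, fun x => ?_⟩
  have hpartial : ∀ R, u x - v R x = ∑ i, ∑ r ∈ Finset.range R, g (v r) i (y i x) := by
    intro R
    induction R with
    | zero => simp [v]
    | succ R ih =>
      simp only [Finset.sum_range_succ, Finset.sum_add_distrib, ← ih, hv_succ,
        ContinuousMap.sub_apply, ContinuousMap.sum_apply, ContinuousMap.comp_apply]
      ring
  have hv_zero : Tendsto (fun R => v R x) atTop (𝓝 0) :=
    squeeze_zero_norm (fun R => ((v R).norm_coe_le_norm x).trans (hv_norm R))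
      (by simpa using (tendsto_pow_atTop_nhds_zero_of_lt_one hθ₀ hθ₁).mul_const ‖u‖)
  refine tendsto_nhds_unique (by simpa using hv_zero.const_sub (u x)) ?_
  simp only [hpartial]
  exact tendsto_finsetSum _ fun i _ =>
    ((hsum.of_norm_bounded fun r => hg_le i r _).hasSum).tendsto_sum_nat

namespace KolmogorovArnold

abbrev Cube (n : ℕ) : Set (Fin n → ℝ) := Icc 0 1

def Cube.coord {n : ℕ} (p : Fin n) : C(Cube n, Icc (0 : ℝ) 1) :=
  ⟨fun x => ⟨x.1 p, x.2.1 p, x.2.2 p⟩,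
    ((continuous_apply p).comp continuous_subtype_val).subtype_mk _⟩

def innerSum {n : ℕ} (φ : Fin n → C(Icc (0 : ℝ) 1, ℝ)) : C(Cube n, ℝ) :=
  ∑ p, (φ p).comp (Cube.coord p)

lemma continuous_innerSum {n : ℕ} :
    Continuous (innerSum : (Fin n → C(Icc (0 : ℝ) 1, ℝ)) → C(Cube n, ℝ)) :=
  continuous_finsetSum _ fun p _ =>
    (ContinuousMap.continuous_precomp _).comp (continuous_apply p)

def approxSet (n : ℕ) (f : C(Cube n, ℝ)) (ε : ℝ) :
    Set (Fin (2 * n + 1) → Fin n → C(Icc (0 : ℝ) 1, ℝ)) :=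
  {Ψ | ∃ g : Fin (2 * n + 1) → C(ℝ, ℝ), (∀ q t, |g q t| ≤ ‖f‖ / (n + 1)) ∧
    ‖f - ∑ q, (g q).comp (innerSum (Ψ q))‖ < n / (n + 1) * ‖f‖ + ε}

lemma isOpen_approxSet (n : ℕ) (f : C(Cube n, ℝ)) (ε : ℝ) : IsOpen (approxSet n f ε) := by
  refine isOpen_iff_mem_nhds.2 fun Ψ ⟨g, hg, hlt⟩ => ?_
  have hcont : Continuous fun Ψ : Fin (2 * n + 1) → Fin n → C(Icc (0 : ℝ) 1, ℝ) =>
      ‖f - ∑ q, (g q).comp (innerSum (Ψ q))‖ :=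
    (continuous_const.sub (continuous_finsetSum _ fun q _ =>
      (ContinuousMap.continuous_postcomp _).comp
        (continuous_innerSum.comp (continuous_apply q)))).norm
  exact Filter.mem_of_superset ((isOpen_lt hcont continuous_const).mem_nhds hlt)
    fun Ψ' h => ⟨g, hg, h⟩

section Perturbation

variable {m n : ℕ}

lemma one_div_two_mul_pos (q : Fin m) : 0 < 1 / (2 * (m : ℝ)) := by
  have : (0 : ℝ) < m := by exact_mod_cast q.pos
  positivity

lemma one_div_two_mul_le (q : Fin m) : 1 / (2 * (m : ℝ)) ≤ 1 / 2 := by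
  have : (1 : ℝ) ≤ m := by exact_mod_cast q.pos
  gcongr; linarith

/-- The `q`-th of `m` shifted grids of mesh `1 / N` has the cells
`[(j - q / m) / N, (j + 1 - q / m) / N]`; `cellSnap` maps each cell, except for gaps of total width
`1 / (m N)` around the grid points, to its centre `cellCenter`. -/
def cellSnap (m N : ℕ) (q : Fin m) : ℝ → ℝ := snap (1 / (2 * m)) N (q / m)

def cellCenter (m N : ℕ) (q : Fin m) (j : ℕ) : ℝ := (j + 1 / 2 - q / m) / N

lemma continuous_cellSnap (N : ℕ) (q : Fin m) : Continuous (cellSnap m N q) :=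
  continuous_snap (one_div_two_mul_pos q) (one_div_two_mul_le q)

lemma abs_cellSnap_sub_le {N : ℕ} (hN : 0 < N) (q : Fin m) (t : ℝ) :
    |cellSnap m N q t - t| ≤ 1 / N :=
  abs_snap_sub_le (one_div_two_mul_pos q) (one_div_two_mul_le q) hN t

lemma cellSnap_eq_cellCenter (N : ℕ) (q : Fin m) {t : ℝ} (ht : 0 ≤ t)
    (h : ¬ NearInt (1 / (2 * m)) (N * t + q / m)) :
    cellSnap m N q t = cellCenter m N q ⌊N * t + q / m⌋₊ :=
  snap_eq_of_not_nearInt (one_div_two_mul_pos q) (by positivity) h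

lemma abs_projIcc_cellSnap_sub_le {N : ℕ} (hN : 0 < N) (q : Fin m) {t : ℝ}
    (ht : t ∈ Icc (0 : ℝ) 1) : |(projIcc 0 1 zero_le_one (cellSnap m N q t) : ℝ) - t| ≤ 1 / N := by
  have := abs_projIcc_sub_projIcc (zero_le_one' ℝ) (c := cellSnap m N q t) (d := t)
  rw [projIcc_of_mem _ ht] at this
  exact this.trans (abs_cellSnap_sub_le hN q t)

def cubeIndex (m N : ℕ) (q : Fin m) (x : Cube n) : Fin n → Fin (N + 1) := fun p =>
  ⟨⌊N * x.1 p + q / m⌋₊, by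
    have hq : (q : ℝ) / m < 1 := (div_lt_one (by exact_mod_cast q.pos)).2 (by exact_mod_cast q.2)
    have hx : (N : ℝ) * x.1 p ≤ N := mul_le_of_le_one_right N.cast_nonneg (x.2.2 p)
    have hx₀ : 0 ≤ (N : ℝ) * x.1 p := mul_nonneg N.cast_nonneg (x.2.1 p)
    rw [Nat.floor_lt (by positivity)]
    push_cast
    linarith⟩

def cellPoint (m N : ℕ) (q : Fin m) (J : Fin n → Fin (N + 1)) : Cube n :=
  ⟨fun p => projIcc 0 1 zero_le_one (cellCenter m N q (J p)),
    fun _ => (projIcc 0 1 zero_le_one _).2.1, fun _ => (projIcc 0 1 zero_le_one _).2.2⟩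

lemma injective_sum_pow_mul_cellCenter {N : ℕ} (hN : 0 < N) (q : Fin m) :
    Injective fun J : Fin n → Fin (N + 1) =>
      ∑ p : Fin n, ((N : ℝ) + 1) ^ (p : ℕ) * cellCenter m N q (J p) := by
  have hdigits : ∀ J : Fin n → Fin (N + 1),
      ∑ p : Fin n, ((N : ℝ) + 1) ^ (p : ℕ) * cellCenter m N q (J p)
        = (∑ p, (J p : ℝ) * ((N + 1 : ℕ) : ℝ) ^ (p : ℕ)
          + (1 / 2 - q / m) * ∑ p : Fin n, ((N : ℝ) + 1) ^ (p : ℕ)) / N := by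
    intro J
    simp only [cellCenter, Finset.mul_sum, ← Finset.sum_add_distrib, Finset.sum_div]
    refine Finset.sum_congr rfl fun p _ => ?_
    push_cast
    ring
  intro J J' h
  refine injective_sum_mul_pow n (N + 1) ?_
  simp only [hdigits] at h
  simpa [div_left_inj' (show (N : ℝ) ≠ 0 by positivity)] using h

def cellValue (Ψ₀ : Fin m → Fin n → C(Icc (0 : ℝ) 1, ℝ)) (N : ℕ) (δ : ℝ) (q : Fin m)
    (J : Fin n → Fin (N + 1)) : ℝ :=
  ∑ p, Ψ₀ q p (projIcc 0 1 zero_le_one (cellCenter m N q (J p)))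
    + δ * ∑ p : Fin n, ((N : ℝ) + 1) ^ (p : ℕ) * cellCenter m N q (J p)

def perturb (Ψ₀ : Fin m → Fin n → C(Icc (0 : ℝ) 1, ℝ)) (N : ℕ) (δ : ℝ) :
    Fin m → Fin n → C(Icc (0 : ℝ) 1, ℝ) := fun q p =>
  ⟨fun t => Ψ₀ q p (projIcc 0 1 zero_le_one (cellSnap m N q t))
      + δ * (N + 1) ^ (p : ℕ) * cellSnap m N q t, by
    have hs : Continuous fun t : Icc (0 : ℝ) 1 => cellSnap m N q t :=
      (continuous_cellSnap N q).comp continuous_subtype_val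
    exact ((Ψ₀ q p).continuous.comp (continuous_projIcc.comp hs)).add (continuous_const.mul hs)⟩

variable (Ψ₀ : Fin m → Fin n → C(Icc (0 : ℝ) 1, ℝ)) {N : ℕ} {δ : ℝ} {q : Fin m} {x : Cube n}

lemma innerSum_perturb_of_forall_not_nearInt
    (h : ∀ p, ¬ NearInt (1 / (2 * m)) (N * x.1 p + q / m)) :
    innerSum (perturb Ψ₀ N δ q) x = cellValue Ψ₀ N δ q (cubeIndex m N q x) := by
  simp only [innerSum, ContinuousMap.sum_apply, ContinuousMap.comp_apply, cellValue,
    Finset.mul_sum, ← Finset.sum_add_distrib]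
  refine Finset.sum_congr rfl fun p _ => ?_
  simp only [perturb, ContinuousMap.coe_mk, Cube.coord, cubeIndex,
    cellSnap_eq_cellCenter N q (x.2.1 p) (h p), mul_assoc]

lemma dist_cellPoint_le (hN : 0 < N) (h : ∀ p, ¬ NearInt (1 / (2 * m)) (N * x.1 p + q / m)) :
    dist (cellPoint m N q (cubeIndex m N q x)) x ≤ 1 / N := by
  rw [Subtype.dist_eq, dist_pi_le_iff (by positivity)]
  intro p
  rw [Real.dist_eq]
  have := abs_projIcc_cellSnap_sub_le hN q ⟨x.2.1 p, x.2.2 p⟩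
  rwa [cellSnap_eq_cellCenter N q (x.2.1 p) (h p)] at this

lemma finite_setOf_not_injective_cellValue (hN : 0 < N) :
    {δ | ∃ q, ¬ Injective (cellValue Ψ₀ N δ q)}.Finite := by
  rw [ofPred_exists]
  exact finite_iUnion fun q =>
    finite_setOf_not_injective_add_mul (injective_sum_pow_mul_cellCenter hN q)

lemma dist_perturb_lt (hN : 0 < N) {r : ℝ}
    (hΨ₀ : ∀ q p (t t' : Icc (0 : ℝ) 1), dist t t' ≤ 1 / N → dist (Ψ₀ q p t) (Ψ₀ q p t') < r / 2)
    (hδ₀ : 0 ≤ δ) (hδ : δ * (2 * (N + 1) ^ n) < r / 2) : dist (perturb Ψ₀ N δ) Ψ₀ < r := by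
  have hr : 0 < r := by nlinarith [pow_pos (show (0 : ℝ) < N + 1 by positivity) n]
  refine (dist_pi_lt_iff hr).2 fun q => (dist_pi_lt_iff hr).2 fun p =>
    (ContinuousMap.dist_lt_iff hr).2 fun t => ?_
  have hclose := hΨ₀ q p _ t (by
    rw [Subtype.dist_eq, Real.dist_eq]; exact abs_projIcc_cellSnap_sub_le hN q t.2)
  have hsnap : |cellSnap m N q t| ≤ 2 := by
    have h1 := abs_cellSnap_sub_le hN q t
    have h2 : (1 : ℝ) / N ≤ 1 := by
      rw [div_le_one (by positivity)]; exact_mod_cast hN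
    have h3 : |(t : ℝ)| ≤ 1 := abs_le.2 ⟨by linarith [t.2.1], t.2.2⟩
    linarith [abs_sub_abs_le_abs_sub (cellSnap m N q t) t]
  have hpow : ((N : ℝ) + 1) ^ (p : ℕ) ≤ (N + 1) ^ n :=
    pow_le_pow_right₀ (by linarith [N.cast_nonneg (α := ℝ)]) p.2.le
  have hshift : |δ * (N + 1) ^ (p : ℕ) * cellSnap m N q t| ≤ δ * (2 * (N + 1) ^ n) := by
    rw [abs_mul, abs_mul, abs_of_nonneg hδ₀, abs_of_pos (by positivity)]
    calc δ * (N + 1) ^ (p : ℕ) * |cellSnap m N q t| ≤ δ * (N + 1) ^ n * 2 := by gcongr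
      _ = δ * (2 * (N + 1) ^ n) := by ring
  rw [Real.dist_eq] at hclose ⊢
  simp only [perturb, ContinuousMap.coe_mk]
  calc _ ≤ |Ψ₀ q p (projIcc 0 1 zero_le_one (cellSnap m N q t)) - Ψ₀ q p t|
        + |δ * (N + 1) ^ (p : ℕ) * cellSnap m N q t| := by
        rw [add_sub_right_comm]; exact abs_add_le _ _
    _ < r := by linarith

end Perturbation

lemma mem_approxSet_perturb {n : ℕ} (f : C(Cube n, ℝ))
    (Ψ₀ : Fin (2 * n + 1) → Fin n → C(Icc (0 : ℝ) 1, ℝ)) {N : ℕ} {δ ε η : ℝ} (hN : 0 < N)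
    (hf : ∀ x y : Cube n, dist x y ≤ 1 / N → dist (f x) (f y) < η)
    (hη : (2 * n + 1) * η < ε) (hinj : ∀ q, Injective (cellValue Ψ₀ N δ q)) :
    perturb Ψ₀ N δ ∈ approxSet n f ε := by
  choose g hg_bound hg_eq using fun q => exists_bounded_interpolation (hinj q)
    (fun J => f (cellPoint (2 * n + 1) N q J) / (n + 1)) (C := ‖f‖ / (n + 1)) (by positivity)
    fun J => by
      rw [abs_div, abs_of_pos (by positivity : (0 : ℝ) < n + 1)]
      gcongr
      exact f.norm_coe_le_norm _
  have hη₀ : 0 ≤ η := by simpa using (hf 0 0 (by simp)).le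
  refine ⟨g, hg_bound, lt_of_le_of_lt ((ContinuousMap.norm_le _ (C := n / (n + 1) * ‖f‖
    + (2 * n + 1) * η) (by positivity)).2 fun x => ?_) (by linarith)⟩
  obtain ⟨G, hG_card, hG_good⟩ := exists_finset_card_sub_le_forall_not
    (fun (q : Fin (2 * n + 1)) p =>
      NearInt (1 / (2 * ((2 * n + 1 : ℕ) : ℝ))) (N * x.1 p + q / ((2 * n + 1 : ℕ) : ℝ)))
    fun p => subsingleton_setOf_nearInt_add_div _
  simp only [Fintype.card_fin] at hG_card
  have hGk : (n : ℝ) + 1 ≤ G.card := by exact_mod_cast (by omega : n + 1 ≤ G.card)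
  have hG_le : (G.card : ℝ) ≤ 2 * n + 1 := by
    exact_mod_cast (Finset.card_le_univ G).trans_eq (by simp)
  have hgood : ∀ q ∈ G, |g q (innerSum (perturb Ψ₀ N δ q) x) - f x / (n + 1)| ≤ η := by
    intro q hq
    rw [innerSum_perturb_of_forall_not_nearInt Ψ₀ (hG_good q hq), hg_eq, ← sub_div, abs_div,
      abs_of_pos (by positivity : (0 : ℝ) < n + 1), ← Real.dist_eq]
    exact (div_le_self dist_nonneg (by linarith [n.cast_nonneg (α := ℝ)])).trans
      (hf _ _ (dist_cellPoint_le hN (hG_good q hq))).le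
  have hsum := abs_sub_sum_le_of_card_le G (fun q => g q (innerSum (perturb Ψ₀ N δ q) x))
    (by positivity) hGk (f.norm_coe_le_norm x) (fun q => hg_bound q _) hgood
  rw [Fintype.card_fin] at hsum
  simp only [ContinuousMap.sub_apply, ContinuousMap.sum_apply, ContinuousMap.comp_apply,
    Real.norm_eq_abs]
  calc _ ≤ (((2 * n + 1 : ℕ) : ℝ) / (n + 1) - 1) * ‖f‖ + G.card * η := hsum
    _ ≤ n / (n + 1) * ‖f‖ + (2 * n + 1) * η := by
      have : ((2 * n + 1 : ℕ) : ℝ) / (n + 1) - 1 = n / (n + 1) := by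
        field_simp; push_cast; ring
      rw [this]
      gcongr

lemma dense_approxSet {n : ℕ} (f : C(Cube n, ℝ)) {ε : ℝ} (hε : 0 < ε) :
    Dense (approxSet n f ε) := by
  rw [Metric.dense_iff]
  intro Ψ₀ r hr
  have hη : 0 < ε / (2 * n + 2) := by positivity
  have hηε : (2 * n + 1) * (ε / (2 * n + 2)) < ε := by
    rw [mul_div_assoc', div_lt_iff₀ (by positivity)]; nlinarith
  obtain ⟨N, hN, hfN, hΨ₀N⟩ := ((eventually_gt_atTop 0).and
    (((CompactSpace.uniformContinuous_of_continuous f.continuous).eventually_forall_dist_lt hη).and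
      (eventually_all.2 fun q => eventually_all.2 fun p =>
        (CompactSpace.uniformContinuous_of_continuous (Ψ₀ q p).continuous).eventually_forall_dist_lt
          (half_pos hr)))).exists
  have hδmax : (0 : ℝ) < r / 2 / (2 * (N + 1) ^ n) := by positivity
  obtain ⟨δ, ⟨hδ₀, hδ⟩, hδinj⟩ :=
    ((Ioo_infinite hδmax).sdiff (finite_setOf_not_injective_cellValue Ψ₀ hN)).nonempty
  refine ⟨perturb Ψ₀ N δ, dist_perturb_lt Ψ₀ hN hΨ₀N hδ₀.le ?_,
    mem_approxSet_perturb f Ψ₀ hN hfN hηε fun q => ?_⟩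
  · rwa [lt_div_iff₀ (by positivity)] at hδ
  · by_contra h
    exact hδinj ⟨q, h⟩

lemma exists_forall_mem_approxSet (n : ℕ) {D : Set C(Cube n, ℝ)} (hD : D.Countable) :
    ∃ Ψ, ∀ f ∈ D, ∀ k : ℕ, Ψ ∈ approxSet n f (1 / (k + 1)) := by
  have : Countable D := hD.to_subtype
  have : BaireSpace (Fin (2 * n + 1) → Fin n → C(Icc (0 : ℝ) 1, ℝ)) :=
    BaireSpace.of_completelyPseudoMetrizable
  obtain ⟨Ψ, hΨ⟩ :=
    (dense_iInter_of_isOpen (f := fun fk : D × ℕ => approxSet n fk.1 (1 / (fk.2 + 1)))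
      (fun _ => isOpen_approxSet ..) fun _ => dense_approxSet _ (by positivity)).nonempty
  exact ⟨Ψ, fun f hf k => mem_iInter.1 hΨ (⟨f, hf⟩, k)⟩

lemma exists_contracting (n : ℕ) :
    ∃ Ψ : Fin (2 * n + 1) → Fin n → C(Icc (0 : ℝ) 1, ℝ), ∀ u : C(Cube n, ℝ),
      ∃ g : Fin (2 * n + 1) → C(ℝ, ℝ), (∀ q t, |g q t| ≤ 2 * ‖u‖) ∧
        ‖u - ∑ q, (g q).comp (innerSum (Ψ q))‖ ≤ (4 * n + 3) / (4 * n + 4) * ‖u‖ := by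
  obtain ⟨D, hD_countable, hD_dense⟩ := TopologicalSpace.exists_countable_dense C(Cube n, ℝ)
  obtain ⟨Ψ, hΨ⟩ := exists_forall_mem_approxSet n hD_countable
  refine ⟨Ψ, fun u => ?_⟩
  rcases (norm_nonneg u).eq_or_lt with hu | hu
  · refine ⟨0, fun q t => by simp [← hu], by simp [norm_eq_zero.1 hu.symm]⟩
  set ε : ℝ := 1 / (4 * (n + 1))
  obtain ⟨f, hfu, hfD⟩ := Metric.dense_iff.1 hD_dense u (ε * ‖u‖) (by positivity)
  obtain ⟨k, hk⟩ := exists_nat_one_div_lt (by positivity : 0 < ε * ‖u‖)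
  obtain ⟨g, hg_bound, hg_approx⟩ := hΨ f hfD k
  rw [Metric.mem_ball, dist_eq_norm] at hfu
  have hf_norm : ‖f‖ ≤ (1 + ε) * ‖u‖ := by linarith [norm_sub_norm_le f u]
  have hε : ε ≤ 1 := by rw [div_le_one (by positivity)]; linarith [n.cast_nonneg (α := ℝ)]
  refine ⟨g, fun q t => ?_, ?_⟩
  · calc |g q t| ≤ ‖f‖ / (n + 1) := hg_bound q t
      _ ≤ ‖f‖ := div_le_self (norm_nonneg f) (by linarith [n.cast_nonneg (α := ℝ)])
      _ ≤ 2 * ‖u‖ := by nlinarith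
  have key : n / (n + 1) * (1 + ε) + 2 * ε ≤ (4 * n + 3) / (4 * n + 4) := by
    rw [← sub_nonneg]
    have e : (4 * n + 3) / (4 * n + 4) - (n / (n + 1) * (1 + ε) + 2 * ε)
        = 1 / (4 * ((n : ℝ) + 1) ^ 2) := by
      simp only [ε]; field_simp; ring
    rw [e]
    positivity
  calc ‖u - ∑ q, (g q).comp (innerSum (Ψ q))‖
      ≤ ‖u - f‖ + ‖f - ∑ q, (g q).comp (innerSum (Ψ q))‖ := norm_sub_le_norm_sub_add_norm_sub ..
    _ ≤ ε * ‖u‖ + (n / (n + 1) * ((1 + ε) * ‖u‖) + ε * ‖u‖) := by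
      rw [norm_sub_rev]
      gcongr
      linarith [mul_le_mul_of_nonneg_left hf_norm (by positivity : (0 : ℝ) ≤ n / (n + 1))]
    _ = (n / (n + 1) * (1 + ε) + 2 * ε) * ‖u‖ := by ring
    _ ≤ _ := by gcongr

end KolmogorovArnold

end

theorem kolmogorov_arnold_representation_general
    (n : ℕ)
    (f : (Fin n → ℝ) → ℝ)
    (hf : ContinuousOn f (Set.Icc (0 : Fin n → ℝ) 1)) :
    ∃ (Φ : Fin (2 * n + 1) → ℝ → ℝ) (φ : Fin (2 * n + 1) → Fin n → ℝ → ℝ),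
      (∀ q, Continuous (Φ q)) ∧
      (∀ q p, ContinuousOn (φ q p) (Set.Icc (0 : ℝ) 1)) ∧
      ∀ x ∈ Set.Icc (0 : Fin n → ℝ) 1,
        f x = ∑ q : Fin (2 * n + 1), Φ q (∑ p : Fin n, φ q p (x p)) := by
  obtain ⟨Ψ, hΨ⟩ := KolmogorovArnold.exists_contracting n
  obtain ⟨Φ, hΦ⟩ := exists_sum_comp_eq_of_contracting (fun q => KolmogorovArnold.innerSum (Ψ q))
    (by positivity) (by rw [div_lt_one (by positivity)]; linarith) hΨ
    ⟨(Set.Icc (0 : Fin n → ℝ) 1).domRestrict f, hf.domRestrict⟩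
  refine ⟨fun q => Φ q, fun q p t => Ψ q p (projIcc 0 1 zero_le_one t), fun q => (Φ q).continuous,
    fun q p => ((Ψ q p).continuous.comp continuous_projIcc).continuousOn, fun x hx => ?_⟩
  refine (hΦ ⟨x, hx⟩).trans (Finset.sum_congr rfl fun q _ => congrArg (Φ q) ?_)
  simp only [KolmogorovArnold.innerSum, ContinuousMap.sum_apply, ContinuousMap.comp_apply]
  exact Finset.sum_congr rfl fun p _ => congrArg (Ψ q p) (projIcc_of_mem _ ⟨hx.1 p, hx.2 p⟩).symm

/-- **Kolmogorov–Arnold representation theorem (Kolmogorov 1957, Arnold 1957).**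
Let `n ≥ 1` and let `f : [0,1]ⁿ → ℝ` be continuous. Then there exist continuous
univariate functions `Φ_q : ℝ → ℝ` (`q = 1, …, 2n+1`) and continuous univariate
functions `φ_{qp} : [0,1] → ℝ` (`q = 1, …, 2n+1`, `p = 1, …, n`) such that for every
`x = (x_1, …, x_n) ∈ [0,1]ⁿ`,
`f x = ∑_{q=1}^{2n+1} Φ_q (∑_{p=1}^{n} φ_{qp} (x_p))`. -/
theorem kolmogorov_arnold_representation
    (n : ℕ) (hn : 1 ≤ n)
    (f : (Fin n → ℝ) → ℝ)
    (hf : ContinuousOn f (Set.Icc (0 : Fin n → ℝ) 1)) :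
    ∃ (Φ : Fin (2 * n + 1) → ℝ → ℝ) (φ : Fin (2 * n + 1) → Fin n → ℝ → ℝ),
      (∀ q, Continuous (Φ q)) ∧
      (∀ q p, ContinuousOn (φ q p) (Set.Icc (0 : ℝ) 1)) ∧
      ∀ x ∈ Set.Icc (0 : Fin n → ℝ) 1,
        f x = ∑ q : Fin (2 * n + 1), Φ q (∑ p : Fin n, φ q p (x p)) :=
  kolmogorov_arnold_representation_general n f hf
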